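/- For fixed t > 0 and parameters C0 > 0, D > 0, R > 0, v ≥ 0, the function z ↦ C(z,t) given by the Ogata–Banks solution is strictly decreasing on [0, ∞). -/

import Mathlib

/-!
In the similarity variables `α = R / (2√(RDt))`, `β = vt / (2√(RDt))` the solution is
`(C0/2) (erfc (αz - β) + e^{4αβz} erfc (αz + β))`.
Since `e^{4αβz} e^{-(αz+β)²} = e^{-(αz-β)²}`, the two Gaussian terms of its `z`-derivative
merge, leaving `4α e^{4αβz} (β erfc (αz + β) - e^{-(αz+β)²}/√π)`. This is negative for
`z > 0` by the Mills-ratio bound `erfc x ≤ e^{-x²}/(x√π)`, because `β < αz + β`.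
-/

/-- The complementary error function `erfc x = (2/√π) ∫ₓ^∞ e^{-s²} ds`. -/
noncomputable def erfc (x : ℝ) : ℝ :=
  (2 / Real.sqrt Real.pi) * ∫ s in Set.Ioi x, Real.exp (-s ^ 2)

/-- The Ogata–Banks analytical solution of the advection–diffusion–retardation
equation. -/
noncomputable def ogataBanks (C0 v D R z t : ℝ) : ℝ :=
  (C0 / 2) * (erfc ((R * z - v * t) / (2 * Real.sqrt (R * D * t))) +
    Real.exp (v * z / D) * erfc ((R * z + v * t) / (2 * Real.sqrt (R * D * t))))


open MeasureTheory Real Set Filter Topology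

theorem hasDerivAt_integral_Ioi {E : Type*} [NormedAddCommGroup E] [NormedSpace ℝ E]
    [CompleteSpace E] {f : ℝ → E} (hf : Continuous f) (hint : Integrable f) (x : ℝ) :
    HasDerivAt (fun y => ∫ s in Ioi y, f s) (-f x) x := by
  have hsplit : (fun y => ∫ s in Ioi y, f s) =
      fun y => (∫ s in Ioi 0, f s) - ∫ s in (0 : ℝ)..y, f s := by
    funext y
    rw [← intervalIntegral.integral_Ioi_sub_Ioi' hint.integrableOn hint.integrableOn,
      sub_sub_cancel]
  rw [hsplit]
  exact (intervalIntegral.integral_hasDerivAt_right (hf.intervalIntegrable 0 x)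
    hf.aestronglyMeasurable.stronglyMeasurableAtFilter hf.continuousAt).const_sub _

theorem integrable_exp_neg_sq : Integrable fun s : ℝ => exp (-s ^ 2) := by
  simpa using integrable_exp_neg_mul_sq one_pos

theorem integrable_mul_exp_neg_sq : Integrable fun s : ℝ => s * exp (-s ^ 2) := by
  simpa using integrable_mul_exp_neg_mul_sq one_pos

theorem integral_Ioi_mul_exp_neg_sq (x : ℝ) :
    ∫ s in Ioi x, s * exp (-s ^ 2) = exp (-x ^ 2) / 2 := by
  have hderiv (s : ℝ) : HasDerivAt (fun s => -exp (-s ^ 2) / 2) (s * exp (-s ^ 2)) s :=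
    ((hasDerivAt_pow 2 s).fun_neg.exp.fun_neg.div_const 2).congr_deriv (by push_cast; ring)
  have hlim : Tendsto (fun s : ℝ => -exp (-s ^ 2) / 2) atTop (𝓝 0) := by
    simpa using (tendsto_exp_atBot.comp
      (tendsto_neg_atTop_atBot.comp (tendsto_pow_atTop two_ne_zero))).neg.div_const 2
  rw [integral_Ioi_of_hasDerivAt_of_tendsto' (fun s _ => hderiv s)
    integrable_mul_exp_neg_sq.integrableOn hlim]
  ring

theorem integral_Ioi_exp_neg_sq_le {x : ℝ} (hx : 0 < x) :
    ∫ s in Ioi x, exp (-s ^ 2) ≤ exp (-x ^ 2) / (2 * x) := by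
  calc ∫ s in Ioi x, exp (-s ^ 2)
      ≤ ∫ s in Ioi x, x⁻¹ * (s * exp (-s ^ 2)) := by
        refine setIntegral_mono_on integrable_exp_neg_sq.integrableOn
          (integrable_mul_exp_neg_sq.integrableOn.const_mul _) measurableSet_Ioi fun s hs => ?_
        rw [← mul_assoc, le_mul_iff_one_le_left (exp_pos _), le_inv_mul_iff₀ hx, mul_one]
        exact hs.le
    _ = exp (-x ^ 2) / (2 * x) := by
        rw [integral_const_mul, integral_Ioi_mul_exp_neg_sq]
        field_simp

theorem hasDerivAt_erfc (x : ℝ) : HasDerivAt erfc (-(2 / √π * exp (-x ^ 2))) x := by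
  rw [← mul_neg]
  exact (hasDerivAt_integral_Ioi (by fun_prop) integrable_exp_neg_sq x).const_mul (2 / √π)

theorem erfc_le_exp_neg_sq_div {x : ℝ} (hx : 0 < x) : erfc x ≤ exp (-x ^ 2) / (x * √π) := by
  calc erfc x ≤ 2 / √π * (exp (-x ^ 2) / (2 * x)) :=
        mul_le_mul_of_nonneg_left (integral_Ioi_exp_neg_sq_le hx) (by positivity)
    _ = exp (-x ^ 2) / (x * √π) := by field_simp

theorem mul_erfc_lt_of_lt {β x : ℝ} (hβ : 0 ≤ β) (hx : β < x) :
    β * erfc x < exp (-x ^ 2) / √π := by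
  have hx₀ : 0 < x := hβ.trans_lt hx
  calc β * erfc x ≤ β * (exp (-x ^ 2) / (x * √π)) :=
        mul_le_mul_of_nonneg_left (erfc_le_exp_neg_sq_div hx₀) hβ
    _ = β / x * (exp (-x ^ 2) / √π) := by ring
    _ < exp (-x ^ 2) / √π := by
        apply mul_lt_of_lt_one_left (by positivity)
        rwa [div_lt_one hx₀]

noncomputable def ogataBanksProfile (α β z : ℝ) : ℝ :=
  erfc (α * z - β) + exp (4 * α * β * z) * erfc (α * z + β)

theorem hasDerivAt_ogataBanksProfile (α β z : ℝ) :
    HasDerivAt (ogataBanksProfile α β)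
      (4 * α * exp (4 * α * β * z) *
        (β * erfc (α * z + β) - exp (-(α * z + β) ^ 2) / √π)) z := by
  have hlin (c : ℝ) : HasDerivAt (fun z => α * z + c) α z := by
    simpa using ((hasDerivAt_id z).const_mul α).add_const c
  have hexp :
      HasDerivAt (fun z => exp (4 * α * β * z)) (exp (4 * α * β * z) * (4 * α * β)) z := by
    simpa using ((hasDerivAt_id z).const_mul (4 * α * β)).exp
  have hgauss : exp (-(α * z - β) ^ 2) = exp (4 * α * β * z) * exp (-(α * z + β) ^ 2) := by
    rw [← exp_add]
    ring_nf
  have h := ((hasDerivAt_erfc _).comp z (hlin (-β))).add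
    (hexp.mul ((hasDerivAt_erfc _).comp z (hlin β)))
  simp only [← sub_eq_add_neg, Function.comp_apply] at h
  refine h.congr_deriv ?_
  rw [hgauss]
  ring

theorem ogataBanksProfile_strictAntiOn {α β : ℝ} (hα : 0 < α) (hβ : 0 ≤ β) :
    StrictAntiOn (ogataBanksProfile α β) (Ici 0) := by
  refine strictAntiOn_of_deriv_neg (convex_Ici 0)
    (fun z _ => (hasDerivAt_ogataBanksProfile α β z).continuousAt.continuousWithinAt) ?_
  rw [interior_Ici]
  intro z (hz : 0 < z)
  rw [(hasDerivAt_ogataBanksProfile α β z).deriv]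
  have hβ_lt : β < α * z + β := by nlinarith
  exact mul_neg_of_pos_of_neg (by positivity) (sub_neg.2 (mul_erfc_lt_of_lt hβ hβ_lt))

theorem ogataBanks_eq_ogataBanksProfile {v D R t : ℝ} (hD : 0 < D) (hR : 0 < R) (ht : 0 < t)
    (C0 z : ℝ) :
    ogataBanks C0 v D R z t = C0 / 2 *
      ogataBanksProfile (R / (2 * √(R * D * t))) (v * t / (2 * √(R * D * t))) z := by
  have hσ2 : √(R * D * t) ^ 2 = R * D * t := sq_sqrt (by positivity)
  have hexponent :
      v * z / D = 4 * (R / (2 * √(R * D * t))) * (v * t / (2 * √(R * D * t))) * z := by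
    set σ := √(R * D * t)
    have hσ : 0 < σ := sqrt_pos.2 (by positivity)
    field_simp
    linear_combination (4 * v * z) * hσ2
  rw [ogataBanks, ogataBanksProfile, hexponent]
  congr 4 <;> ring

/-- For fixed `t > 0`, the Ogata–Banks solution is strictly decreasing in the
depth `z` on `[0, ∞)`. -/
theorem ogata_banks_strictAnti_in_depth (C0 v D R : ℝ)
    (hC0 : 0 < C0) (hv : 0 ≤ v) (hD : 0 < D) (hR : 0 < R) :
    ∀ t : ℝ, 0 < t →
      StrictAntiOn (fun z => ogataBanks C0 v D R z t) (Set.Ici 0) := by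
  intro t ht x hx y hy hxy
  have hσ : 0 < 2 * √(R * D * t) := by positivity
  simp only [ogataBanks_eq_ogataBanksProfile hD hR ht]
  exact mul_lt_mul_of_pos_left
    (ogataBanksProfile_strictAntiOn (div_pos hR hσ) (by positivity) hx hy hxy) (half_pos hC0)
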